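/- arXiv:2311.16523 — 4 statements merged into one kernel-verified Lean document; each statement's English description precedes it below -/
import Mathlib

section
/- If z^c = σ^c e^{jθ^c} and z^b = σ^b e^{jθ^b} are nonzero complex numbers with θ^c - θ^b ∈ [0, 2π), and z^x = z^c - z^b is nonzero, then an argument θ^x of z^x lies in the interval [min{θ^c, θ^b + π}, max{θ^c, θ^b + π}]. -/
open Matrix Complex

noncomputable section

/-- The numerical range of a complex square matrix. -/
def numRange {ι : Type*} [Fintype ι] (C : Matrix ι ι ℂ) : Set ℂ :=
  {z | ∃ x : ι → ℂ, star x ⬝ᵥ x = 1 ∧ star x ⬝ᵥ C.mulVec x = z}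

/-- A matrix is sectorial if its numerical range does not contain 0. -/
def Sectorial {ι : Type*} [Fintype ι] (C : Matrix ι ι ℂ) : Prop :=
  (0 : ℂ) ∉ numRange C

/-- `PhasesIn C α β` : `C` admits a sectorial decomposition `C = Tᴴ D T` with `T`
invertible and `D` diagonal unitary whose diagonal entries have arguments in `[α, β]`. -/
def PhasesIn {ι : Type*} [Fintype ι] [DecidableEq ι] (C : Matrix ι ι ℂ) (α β : ℝ) : Prop :=
  ∃ T D : Matrix ι ι ℂ, IsUnit T ∧ D.IsDiag ∧ C = Tᴴ * D * T ∧
    ∀ i, ∃ θ : ℝ, α ≤ θ ∧ θ ≤ β ∧ D i i = Complex.exp ((θ : ℂ) * Complex.I)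

/-- `C ∈ Z[α, β]` : sectorial with all phases in `[α, β]`. -/
def MemZ {ι : Type*} [Fintype ι] [DecidableEq ι] (C : Matrix ι ι ℂ) (α β : ℝ) : Prop :=
  Sectorial C ∧ PhasesIn C α β

/-- The closed sector `{r e^{jθ} : r ≥ 0, α ≤ θ ≤ β}` in the complex plane. -/
def sector (α β : ℝ) : Set ℂ :=
  {z | ∃ r θ : ℝ, 0 ≤ r ∧ α ≤ θ ∧ θ ≤ β ∧ z = (r : ℂ) * Complex.exp ((θ : ℂ) * Complex.I)}

/-! Writing `zc - zb = ‖zc‖ e^{jθc} + ‖zb‖ e^{j(θb + π)}`, the two phases differ by at most `π`.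
Rotating a sum `r e^{jα} + s e^{jβ}` by the mid-phase `(α + β)/2` makes it
`r e^{-jδ} + s e^{jδ}` with `δ = (β - α)/2`, whose real part is `(r + s) cos δ`; the triangle
inequality then bounds the cosine of its argument below by `cos δ`, so the argument lies
within `|δ|` of zero. -/

theorem Complex.abs_arg_le_of_cos_mul_norm_le_re {w : ℂ} {δ : ℝ} (hδ : 0 ≤ δ)
    (h : Real.cos δ * ‖w‖ ≤ w.re) : |arg w| ≤ δ := by
  rcases eq_or_ne w 0 with rfl | hw
  · simpa using hδ
  by_contra! hlt
  have hcos : Real.cos (arg w) < Real.cos δ := by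
    rw [← Real.cos_abs]
    exact Real.cos_lt_cos_of_nonneg_of_le_pi hδ (abs_arg_le_pi w) hlt
  rw [cos_arg hw, div_lt_iff₀ (norm_pos_iff.2 hw)] at hcos
  linarith

theorem Complex.exists_phase_mem_uIcc_of_add {α β r s : ℝ} (hαβ : |β - α| ≤ Real.pi)
    (hr : 0 ≤ r) (hs : 0 ≤ s) :
    ∃ θ ∈ Set.uIcc α β, (r : ℂ) * exp (α * I) + s * exp (β * I) =
      (‖(r : ℂ) * exp (α * I) + s * exp (β * I)‖ : ℂ) * exp (θ * I) := by
  set z : ℂ := r * exp (α * I) + s * exp (β * I)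
  set m : ℝ := (α + β) / 2 with hm
  set δ : ℝ := (β - α) / 2 with hδ
  set w : ℂ := r * exp ((-δ : ℝ) * I) + s * exp (δ * I)
  have hzw : z = w * exp (m * I) := by
    simp only [z, w, m, δ, add_mul, mul_assoc, ← exp_add]
    congr 3 <;> push_cast <;> ring
  have hre : w.re = (r + s) * Real.cos δ := by
    simp only [w, add_re, re_ofReal_mul, exp_ofReal_mul_I_re, Real.cos_neg]
    ring
  have hnorm : ‖w‖ ≤ r + s := by
    refine (norm_add_le _ _).trans_eq ?_
    simp only [norm_mul, norm_real, Real.norm_eq_abs, abs_of_nonneg hr, abs_of_nonneg hs,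
      norm_exp_ofReal_mul_I, mul_one]
  have hδ_le : |δ| ≤ Real.pi / 2 := by
    rw [abs_div, abs_two]
    linarith
  have hcos : 0 ≤ Real.cos δ := Real.cos_nonneg_of_mem_Icc (abs_le.1 hδ_le)
  have harg : |arg w| ≤ |δ| := by
    refine abs_arg_le_of_cos_mul_norm_le_re (abs_nonneg δ) ?_
    rw [Real.cos_abs, hre, mul_comm (r + s)]
    exact mul_le_mul_of_nonneg_left hnorm hcos
  refine ⟨m + arg w, ?_, ?_⟩
  · obtain ⟨hlo, hhi⟩ := abs_le.1 harg
    rw [Set.mem_uIcc]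
    rcases le_total α β with h | h
    · rw [abs_of_nonneg (by linarith)] at hlo hhi
      exact Or.inl ⟨by linarith, by linarith⟩
    · rw [abs_of_nonpos (by linarith)] at hlo hhi
      exact Or.inr ⟨by linarith, by linarith⟩
  · calc z = ‖w‖ * exp (arg w * I) * exp (m * I) := by rw [norm_mul_exp_arg_mul_I, hzw]
      _ = ‖z‖ * exp ((m + arg w : ℝ) * I) := by
        rw [hzw, norm_mul, norm_exp_ofReal_mul_I, mul_one, mul_assoc, ← exp_add]
        push_cast
        ring_nf

theorem phase_of_difference_of_scalars_general (zc zb : ℂ) (θc θb : ℝ)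
    (hpc : zc = (‖zc‖ : ℂ) * Complex.exp ((θc : ℂ) * Complex.I))
    (hpb : zb = (‖zb‖ : ℂ) * Complex.exp ((θb : ℂ) * Complex.I))
    (hθlo : 0 ≤ θc - θb) (hθhi : θc - θb < 2 * Real.pi) :
    ∃ θx : ℝ, zc - zb = (‖zc - zb‖ : ℂ) * Complex.exp ((θx : ℂ) * Complex.I) ∧
      min θc (θb + Real.pi) ≤ θx ∧ θx ≤ max θc (θb + Real.pi) := by
  have hdiff : zc - zb = ‖zc‖ * exp (θc * I) + ‖zb‖ * exp ((θb + Real.pi : ℝ) * I) := by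
    rw [ofReal_add, add_mul, exp_add_pi_mul_I, ← hpc]
    nth_rewrite 1 [hpb]
    ring
  obtain ⟨θx, hmem, hpolar⟩ := exists_phase_mem_uIcc_of_add (α := θc) (β := θb + Real.pi)
    (abs_le.2 ⟨by linarith, by linarith⟩) (norm_nonneg zc) (norm_nonneg zb)
  exact ⟨θx, hdiff ▸ hpolar, hmem⟩

theorem phase_of_difference_of_scalars (zc zb : ℂ) (θc θb : ℝ)
    (hc : zc ≠ 0) (hb : zb ≠ 0)
    (hpc : zc = (‖zc‖ : ℂ) * Complex.exp ((θc : ℂ) * Complex.I))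
    (hpb : zb = (‖zb‖ : ℂ) * Complex.exp ((θb : ℂ) * Complex.I))
    (hθlo : 0 ≤ θc - θb) (hθhi : θc - θb < 2 * Real.pi)
    (hx : zc - zb ≠ 0) :
    ∃ θx : ℝ, zc - zb = (‖zc - zb‖ : ℂ) * Complex.exp ((θx : ℂ) * Complex.I) ∧
      min θc (θb + Real.pi) ≤ θx ∧ θx ≤ max θc (θb + Real.pi) :=
  phase_of_difference_of_scalars_general zc zb θc θb hpc hpb hθlo hθhi
end
end

section
/- Let Z ∈ ℂ^{n×n} be sectorial with phases in [α, β], partitioned as Z = [[Z₁₁, Z₁₂],[Z₂₁, Z₂₂]] with Z₂₂ square; then Z₂₂ is invertible and the Schur complement Z/₂₂ = Z₁₁ − Z₁₂ Z₂₂⁻¹ Z₂₁ is sectorial with phases in [α, β]. -/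
open Matrix Complex

noncomputable section

/-! For `β - α < π`, a matrix lies in `𝒵[α, β]` exactly when its quadratic form `x ↦ x* C x`
maps every nonzero vector into `sector α β \ {0}`. A decomposition `C = Tᴴ D T` writes `x* C x` as a
nonnegative combination of the phases `D i i`, which stays in the (convex) sector. Conversely, a
matrix whose quadratic form lies in an open half-plane is congruent to a diagonal matrix, by
simultaneous diagonalisation of its Hermitian and skew-Hermitian parts; the diagonal entries are
values of the quadratic form, hence lie in the sector, and normalising them gives the phases.
The quadratic forms of `Z₂₂` and of `Z/₂₂` are restrictions of that of `Z`, the latter to the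
vectors `(x, -Z₂₂⁻¹ Z₂₁ x)`, on which `Z` acts as `(Z/₂₂ x, 0)`. -/

open scoped Real ComplexStarModule ComplexOrder

theorem abs_sin_le_tan_mul_cos_iff {φ δ : ℝ} (hφ : |φ| < π / 2) (hδ₀ : 0 ≤ δ) (hδ : δ < π / 2) :
    |Real.sin φ| ≤ Real.tan δ * Real.cos φ ↔ |φ| ≤ δ := by
  have hcos : 0 < Real.cos φ := by
    rw [← Real.cos_abs]
    exact Real.cos_pos_of_mem_Ioo ⟨by linarith [abs_nonneg φ], hφ⟩
  rw [← div_le_iff₀ hcos, Real.abs_sin_eq_sin_abs_of_abs_le_pi (by linarith [Real.pi_pos]),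
    ← Real.cos_abs, ← Real.tan_eq_sin_div_cos]
  exact Real.strictMonoOn_tan.le_iff_le ⟨by linarith [abs_nonneg φ], hφ⟩ ⟨by linarith, hδ⟩

section Sector

variable {γ δ : ℝ}

theorem re_exp_neg_mul_pos_of_mem_sector (hδ : δ < π / 2) {z : ℂ}
    (hz : z ∈ sector (γ - δ) (γ + δ) \ {0}) : 0 < (exp (-γ * I) * z).re := by
  obtain ⟨⟨r, θ, hr, hθ₁, hθ₂, rfl⟩, hz₀⟩ := hz
  have hr₀ : 0 < r := hr.lt_of_ne (by rintro rfl; simp at hz₀)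
  have hrot : exp (-γ * I) * (r * exp (θ * I)) = r * exp ((θ - γ : ℝ) * I) := by
    rw [mul_left_comm, ← exp_add]; push_cast; ring_nf
  rw [hrot, re_ofReal_mul, exp_ofReal_mul_I_re]
  exact mul_pos hr₀ (Real.cos_pos_of_mem_Ioo ⟨by linarith, by linarith⟩)

theorem exp_mul_mem_sector_of_abs_im_le (hδ₀ : 0 ≤ δ) (hδ : δ < π / 2) {w : ℂ}
    (hre : 0 < w.re) (him : |w.im| ≤ Real.tan δ * w.re) :
    exp (γ * I) * w ∈ sector (γ - δ) (γ + δ) \ {0} := by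
  have hw₀ : w ≠ 0 := by rintro rfl; simp at hre
  have harg : |arg w| ≤ δ := by
    rw [← abs_sin_le_tan_mul_cos_iff (abs_arg_lt_pi_div_two_iff.2 (.inl hre)) hδ₀ hδ,
      sin_arg, cos_arg hw₀, abs_div, abs_norm, ← mul_div_assoc,
      div_le_div_iff_of_pos_right (norm_pos_iff.2 hw₀)]
    exact him
  refine ⟨⟨‖w‖, γ + arg w, norm_nonneg w, by linarith [(abs_le.1 harg).1],
    by linarith [(abs_le.1 harg).2], ?_⟩, by simpa using hw₀⟩
  conv_lhs => rw [← norm_mul_exp_arg_mul_I w]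
  push_cast
  rw [add_mul, exp_add]
  ring

theorem sum_mul_exp_mem_sector {ι : Type*} [Fintype ι] (hδ : δ < π / 2) (c θ : ι → ℝ)
    (hc : ∀ i, 0 ≤ c i) (hpos : ∃ i, 0 < c i) (hθ : ∀ i, θ i ∈ Set.Icc (γ - δ) (γ + δ)) :
    ∑ i, (c i : ℂ) * exp (θ i * I) ∈ sector (γ - δ) (γ + δ) \ {0} := by
  obtain ⟨i₀, hi₀⟩ := hpos
  have hδ₀ : 0 ≤ δ := by linarith [(hθ i₀).1, (hθ i₀).2]
  have hφ : ∀ i, |θ i - γ| ≤ δ := fun i =>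
    abs_sub_le_iff.2 ⟨by linarith [(hθ i).2], by linarith [(hθ i).1]⟩
  have hcos : ∀ i, 0 < Real.cos (θ i - γ) := fun i => by
    rw [← Real.cos_abs]
    exact Real.cos_pos_of_mem_Ioo ⟨by linarith [abs_nonneg (θ i - γ)], by linarith [hφ i]⟩
  set w := ∑ i, (c i : ℂ) * exp ((θ i - γ : ℝ) * I) with hw
  have hre : w.re = ∑ i, c i * Real.cos (θ i - γ) := by
    simp only [hw, re_sum, re_ofReal_mul, exp_ofReal_mul_I_re]
  have him : w.im = ∑ i, c i * Real.sin (θ i - γ) := by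
    simp only [hw, im_sum, im_ofReal_mul, exp_ofReal_mul_I_im]
  have hrot : ∑ i, (c i : ℂ) * exp (θ i * I) = exp (γ * I) * w := by
    rw [hw, Finset.mul_sum]
    refine Finset.sum_congr rfl fun i _ => ?_
    rw [mul_left_comm, ← exp_add]; push_cast; ring_nf
  rw [hrot]
  refine exp_mul_mem_sector_of_abs_im_le hδ₀ hδ ?_ ?_
  · rw [hre]
    exact Finset.sum_pos' (fun i _ => mul_nonneg (hc i) (hcos i).le)
      ⟨i₀, Finset.mem_univ _, mul_pos hi₀ (hcos i₀)⟩
  · rw [hre, him, Finset.mul_sum]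
    refine (Finset.abs_sum_le_sum_abs _ _).trans (Finset.sum_le_sum fun i _ => ?_)
    rw [abs_mul, abs_of_nonneg (hc i), mul_left_comm]
    exact mul_le_mul_of_nonneg_left ((abs_sin_le_tan_mul_cos_iff
      ((hφ i).trans_lt hδ) hδ₀ hδ).2 (hφ i)) (hc i)

end Sector

namespace Matrix

variable {ι : Type*} [Fintype ι]

theorem star_dotProduct_conjTranspose_mul_mul_mulVec {R : Type*} [CommRing R] [StarRing R]
    (T C : Matrix ι ι R) (x : ι → R) :
    star x ⬝ᵥ (Tᴴ * C * T) *ᵥ x = star (T *ᵥ x) ⬝ᵥ C *ᵥ (T *ᵥ x) := by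
  rw [star_mulVec, ← dotProduct_mulVec, mulVec_mulVec, mulVec_mulVec, Matrix.mul_assoc]

theorem star_dotProduct_diagonal_mulVec [DecidableEq ι] (d y : ι → ℂ) :
    star y ⬝ᵥ diagonal d *ᵥ y = ∑ i, (normSq (y i) : ℂ) * d i := by
  simp only [dotProduct, mulVec_diagonal, Pi.star_apply]
  refine Finset.sum_congr rfl fun i _ => ?_
  rw [star_def, normSq_eq_conj_mul_self]
  ring

theorem star_dotProduct_realPart_mulVec (A : Matrix ι ι ℂ) (x : ι → ℂ) :
    star x ⬝ᵥ (ℜ A : Matrix ι ι ℂ) *ᵥ x = ((star x ⬝ᵥ A *ᵥ x).re : ℂ) := by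
  have hstar : star x ⬝ᵥ Aᴴ *ᵥ x = star (star x ⬝ᵥ A *ᵥ x) := by
    rw [star_dotProduct, star_mulVec, conjTranspose_conjTranspose, dotProduct_mulVec]
  rw [realPart_apply_coe, smul_mulVec, add_mulVec, dotProduct_smul, dotProduct_add,
    star_eq_conjTranspose, hstar, star_def, add_conj, real_smul]
  push_cast
  ring

theorem posDef_realPart_of_forall_re_pos {A : Matrix ι ι ℂ}
    (h : ∀ x ≠ 0, 0 < (star x ⬝ᵥ A *ᵥ x).re) : (ℜ A : Matrix ι ι ℂ).PosDef := by
  refine .of_dotProduct_mulVec_pos (ℜ A).2.isHermitian fun x hx => ?_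
  rw [star_dotProduct_realPart_mulVec]
  exact_mod_cast h x hx

open scoped MatrixOrder in
theorem PosDef.exists_isUnit_eq_conjTranspose_mul_self [DecidableEq ι] {H : Matrix ι ι ℂ}
    (hH : H.PosDef) : ∃ R : Matrix ι ι ℂ, IsUnit R ∧ H = Rᴴ * R := by
  refine ⟨CFC.sqrt H, (CFC.isUnit_sqrt_iff H hH.posSemidef.nonneg).2 hH.isUnit, ?_⟩
  rw [(CFC.sqrt_nonneg H).posSemidef.isHermitian.eq,
    CFC.sqrt_mul_sqrt_self H hH.posSemidef.nonneg]

theorem PosDef.exists_simultaneous_diagonalization [DecidableEq ι] {H K : Matrix ι ι ℂ}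
    (hH : H.PosDef) (hK : K.IsHermitian) :
    ∃ (S : Matrix ι ι ℂ) (μ : ι → ℝ), IsUnit S ∧ H = Sᴴ * S ∧
      K = Sᴴ * diagonal (fun i => (μ i : ℂ)) * S := by
  -- with `H = Rᴴ R` and `R⁻ᴴ K R⁻¹ = U Λ Uᴴ`, the matrix `S = Uᴴ R` works
  obtain ⟨R, hR, rfl⟩ := hH.exists_isUnit_eq_conjTranspose_mul_self
  have hM := isHermitian_conjTranspose_mul_mul R⁻¹ hK
  set U := hM.eigenvectorUnitary
  have hΛ : star (U : Matrix ι ι ℂ) * (R⁻¹ᴴ * K * R⁻¹) * U =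
      diagonal (fun i => (hM.eigenvalues i : ℂ)) :=
    (Unitary.conjStarAlgAut_star_apply _ _).symm.trans hM.conjStarAlgAut_star_eigenvectorUnitary
  have hR' : R⁻¹ * R = 1 := nonsing_inv_mul _ ((isUnit_iff_isUnit_det R).1 hR)
  have hRR : Rᴴ * R⁻¹ᴴ = 1 := by rw [← conjTranspose_mul, hR', conjTranspose_one]
  have hUU : (U : Matrix ι ι ℂ) * star (U : Matrix ι ι ℂ) = 1 := mem_unitaryGroup_iff.1 U.2
  have hUH : (star (U : Matrix ι ι ℂ))ᴴ = U := by rw [← star_eq_conjTranspose, star_star]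
  refine ⟨star (U : Matrix ι ι ℂ) * R, hM.eigenvalues, Unitary.isUnit_coe.star.mul hR, ?_, ?_⟩
  · rw [conjTranspose_mul, hUH, Matrix.mul_assoc, ← Matrix.mul_assoc (U : Matrix ι ι ℂ), hUU,
      Matrix.one_mul]
  · rw [← hΛ, conjTranspose_mul, hUH]
    calc K = (Rᴴ * R⁻¹ᴴ) * K * (R⁻¹ * R) := by rw [hRR, hR', Matrix.one_mul, Matrix.mul_one]
      _ = Rᴴ * ((U * star (U : Matrix ι ι ℂ)) * (R⁻¹ᴴ * K * R⁻¹) *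
          (U * star (U : Matrix ι ι ℂ))) * R := by
        simp only [hUU, Matrix.one_mul, Matrix.mul_one, Matrix.mul_assoc]
      _ = _ := by simp only [Matrix.mul_assoc]

theorem exists_eq_conjTranspose_mul_diagonal_mul_of_re_pos [DecidableEq ι] {A : Matrix ι ι ℂ}
    {c : ℂ} (hc : c ≠ 0) (h : ∀ x ≠ 0, 0 < (c * (star x ⬝ᵥ A *ᵥ x)).re) :
    ∃ (S : Matrix ι ι ℂ) (d : ι → ℂ), IsUnit S ∧ A = Sᴴ * diagonal d * S := by
  have hpos : (ℜ (c • A) : Matrix ι ι ℂ).PosDef := by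
    refine posDef_realPart_of_forall_re_pos fun x hx => ?_
    rw [smul_mulVec, dotProduct_smul, smul_eq_mul]
    exact h x hx
  obtain ⟨S, μ, hS, hre, him⟩ :=
    hpos.exists_simultaneous_diagonalization (ℑ (c • A)).2.isHermitian
  refine ⟨S, fun i => c⁻¹ * (1 + I * μ i), hS, ?_⟩
  have hd : diagonal (fun i => c⁻¹ * (1 + I * μ i)) =
      c⁻¹ • (1 + I • diagonal (fun i => (μ i : ℂ))) := by
    ext i j
    rcases eq_or_ne i j with rfl | hij <;> simp [*]
  calc A = c⁻¹ • (ℜ (c • A) + I • ℑ (c • A) : Matrix ι ι ℂ) := by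
        rw [realPart_add_I_smul_imaginaryPart, smul_smul, inv_mul_cancel₀ hc, one_smul]
    _ = Sᴴ * diagonal (fun i => c⁻¹ * (1 + I * μ i)) * S := by
        rw [hre, him, hd]
        simp only [Matrix.mul_smul, Matrix.smul_mul, Matrix.mul_add, Matrix.add_mul,
          Matrix.mul_one, Matrix.mul_assoc]

theorem exists_star_dotProduct_mulVec_eq_of_eq_conjTranspose_mul_diagonal_mul [DecidableEq ι]
    {A S : Matrix ι ι ℂ} {d : ι → ℂ} (hS : IsUnit S) (hA : A = Sᴴ * diagonal d * S) (i : ι) :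
    ∃ x ≠ 0, star x ⬝ᵥ A *ᵥ x = d i := by
  have hSS : S * S⁻¹ = 1 := mul_nonsing_inv _ ((isUnit_iff_isUnit_det S).1 hS)
  have hx : S *ᵥ (S⁻¹ *ᵥ Pi.single i 1) = Pi.single i 1 := by
    rw [mulVec_mulVec, hSS, one_mulVec]
  refine ⟨S⁻¹ *ᵥ Pi.single i 1, fun h0 => ?_, ?_⟩
  · rw [h0, mulVec_zero] at hx
    simpa using congrFun hx i
  · rw [hA, star_dotProduct_conjTranspose_mul_mul_mulVec, hx, star_dotProduct_diagonal_mulVec]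
    simp [Pi.single_apply, apply_ite]

theorem diagonal_ofReal_mul_eq_conjTranspose_mul_mul [DecidableEq ι] {r : ι → ℝ}
    (hr : ∀ i, 0 ≤ r i) (u : ι → ℂ) :
    diagonal (fun i => (r i : ℂ) * u i) =
      (diagonal fun i => (√(r i) : ℂ))ᴴ * diagonal u * diagonal fun i => (√(r i) : ℂ) := by
  rw [diagonal_conjTranspose, diagonal_mul_diagonal, diagonal_mul_diagonal]
  congr 1
  funext i
  simp only [Pi.star_apply, star_def, conj_ofReal]
  rw [mul_right_comm, ← ofReal_mul, Real.mul_self_sqrt (hr i)]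

theorem isUnit_of_forall_star_dotProduct_mulVec_ne_zero {K : Type*} [Field K] [StarRing K]
    [DecidableEq ι] {M : Matrix ι ι K} (h : ∀ x ≠ 0, star x ⬝ᵥ M *ᵥ x ≠ 0) : IsUnit M := by
  rw [isUnit_iff_isUnit_det, isUnit_iff_ne_zero, Ne, ← exists_mulVec_eq_zero_iff]
  rintro ⟨x, hx, hMx⟩
  exact h x hx (by rw [hMx, dotProduct_zero])

section Blocks

variable {l m R : Type*} [Fintype l] [Fintype m] [CommRing R]

theorem star_sumElim_zero_dotProduct_fromBlocks_mulVec [StarRing R] (A : Matrix l l R)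
    (B : Matrix l m R) (C : Matrix m l R) (D : Matrix m m R) (y : m → R) :
    star (Sum.elim 0 y) ⬝ᵥ fromBlocks A B C D *ᵥ Sum.elim 0 y = star y ⬝ᵥ D *ᵥ y := by
  simp [fromBlocks_mulVec, Function.star_sumElim, sumElim_dotProduct_sumElim]

theorem fromBlocks_mulVec_sumElim_schur [DecidableEq m] (A : Matrix l l R) (B : Matrix l m R)
    (C : Matrix m l R) {D : Matrix m m R} (hD : IsUnit D.det) (x : l → R) :
    fromBlocks A B C D *ᵥ Sum.elim x (-(D⁻¹ * C) *ᵥ x) =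
      Sum.elim ((A - B * D⁻¹ * C) *ᵥ x) 0 := by
  rw [fromBlocks_mulVec, Sum.elim_comp_inl, Sum.elim_comp_inr, neg_mulVec, mulVec_neg,
    mulVec_neg, mulVec_mulVec, mulVec_mulVec, ← Matrix.mul_assoc D, mul_nonsing_inv _ hD,
    Matrix.one_mul, add_neg_cancel, sub_mulVec, sub_eq_add_neg, Matrix.mul_assoc]

theorem star_sumElim_dotProduct_fromBlocks_mulVec_schur [StarRing R] [DecidableEq m]
    (A : Matrix l l R) (B : Matrix l m R) (C : Matrix m l R) {D : Matrix m m R}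
    (hD : IsUnit D.det) (x : l → R) :
    star (Sum.elim x (-(D⁻¹ * C) *ᵥ x)) ⬝ᵥ fromBlocks A B C D *ᵥ Sum.elim x (-(D⁻¹ * C) *ᵥ x) =
      star x ⬝ᵥ (A - B * D⁻¹ * C) *ᵥ x := by
  rw [fromBlocks_mulVec_sumElim_schur A B C hD, Function.star_sumElim,
    sumElim_dotProduct_sumElim, dotProduct_zero, add_zero]

end Blocks

end Matrix

section Phases

variable {ι : Type*} [Fintype ι] [DecidableEq ι] {γ δ : ℝ}

theorem PhasesIn.star_dotProduct_mulVec_mem_sector {C : Matrix ι ι ℂ} (hδ : δ < π / 2)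
    (hC : PhasesIn C (γ - δ) (γ + δ)) {x : ι → ℂ} (hx : x ≠ 0) :
    star x ⬝ᵥ C *ᵥ x ∈ sector (γ - δ) (γ + δ) \ {0} := by
  obtain ⟨T, D, hT, hD, rfl, hphase⟩ := hC
  choose θ hθ₁ hθ₂ hDθ using hphase
  obtain ⟨i₀, hi₀⟩ := Function.ne_iff.1 <| (mulVec_injective_iff_isUnit.2 hT).ne hx
  rw [star_dotProduct_conjTranspose_mul_mul_mulVec, ← hD.diagonal_diag,
    star_dotProduct_diagonal_mulVec]
  simp only [diag, hDθ]
  exact sum_mul_exp_mem_sector hδ _ θ (fun i => normSq_nonneg _)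
    ⟨i₀, by simpa [normSq_pos] using hi₀⟩ fun i => ⟨hθ₁ i, hθ₂ i⟩

theorem phasesIn_of_forall_mem_sector {A : Matrix ι ι ℂ} (hδ : δ < π / 2)
    (h : ∀ x ≠ 0, star x ⬝ᵥ A *ᵥ x ∈ sector (γ - δ) (γ + δ) \ {0}) :
    PhasesIn A (γ - δ) (γ + δ) := by
  obtain ⟨S, d, hS, hA⟩ := exists_eq_conjTranspose_mul_diagonal_mul_of_re_pos (exp_ne_zero _)
    fun x hx => re_exp_neg_mul_pos_of_mem_sector hδ (h x hx)
  have hd : ∀ i, d i ∈ sector (γ - δ) (γ + δ) \ {0} := fun i => by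
    obtain ⟨x, hx, hxd⟩ :=
      exists_star_dotProduct_mulVec_eq_of_eq_conjTranspose_mul_diagonal_mul hS hA i
    exact hxd ▸ h x hx
  choose r θ hr hθ₁ hθ₂ hrθ using fun i => (hd i).1
  have hr₀ : ∀ i, r i ≠ 0 := fun i hri => (hd i).2 (by simp [hrθ i, hri])
  refine ⟨diagonal (fun i => (√(r i) : ℂ)) * S, diagonal fun i => exp (θ i * I), ?_,
    isDiag_diagonal _, ?_, fun i => ⟨θ i, hθ₁ i, hθ₂ i, diagonal_apply_eq _ _⟩⟩
  · refine IsUnit.mul ?_ hS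
    rw [isUnit_diagonal, Pi.isUnit_iff]
    exact fun i => isUnit_iff_ne_zero.2 (ofReal_ne_zero.2 (Real.sqrt_ne_zero'.2
      ((hr i).lt_of_ne (hr₀ i).symm)))
  · rw [hA, show d = fun i => (r i : ℂ) * exp (θ i * I) from funext hrθ,
      diagonal_ofReal_mul_eq_conjTranspose_mul_mul hr, conjTranspose_mul]
    simp only [Matrix.mul_assoc]

theorem memZ_iff_forall_mem_sector {C : Matrix ι ι ℂ} (hδ : δ < π / 2) :
    MemZ C (γ - δ) (γ + δ) ↔ ∀ x ≠ 0, star x ⬝ᵥ C *ᵥ x ∈ sector (γ - δ) (γ + δ) \ {0} := by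
  refine ⟨fun hC x hx => hC.2.star_dotProduct_mulVec_mem_sector hδ hx,
    fun h => ⟨?_, phasesIn_of_forall_mem_sector hδ h⟩⟩
  rintro ⟨x, hx, hx0⟩
  refine (h x ?_).2 hx0
  rintro rfl
  simp at hx

end Phases

theorem schur_complement_of_sectorial {l m : Type*} [Fintype l] [Fintype m]
    [DecidableEq l] [DecidableEq m]
    (Z : Matrix (l ⊕ m) (l ⊕ m) ℂ) (α β : ℝ)
    (hαβ : β - α < Real.pi) (hZ : MemZ Z α β) :
    IsUnit Z.toBlocks₂₂ ∧
      MemZ (Z.toBlocks₁₁ - Z.toBlocks₁₂ * Z.toBlocks₂₂⁻¹ * Z.toBlocks₂₁) α β := by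
  obtain ⟨γ, δ, rfl, rfl⟩ : ∃ γ δ : ℝ, α = γ - δ ∧ β = γ + δ :=
    ⟨(α + β) / 2, (β - α) / 2, by ring, by ring⟩
  have hδ : δ < π / 2 := by linarith
  rw [memZ_iff_forall_mem_sector hδ, ← fromBlocks_toBlocks Z] at hZ
  have h₂₂ : ∀ y ≠ 0, star y ⬝ᵥ Z.toBlocks₂₂ *ᵥ y ∈ sector (γ - δ) (γ + δ) \ {0} := by
    intro y hy
    rw [← star_sumElim_zero_dotProduct_fromBlocks_mulVec Z.toBlocks₁₁ Z.toBlocks₁₂ Z.toBlocks₂₁]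
    exact hZ _ fun h => hy (funext fun i => congrFun h (Sum.inr i))
  have hD := isUnit_of_forall_star_dotProduct_mulVec_ne_zero fun y hy => (h₂₂ y hy).2
  refine ⟨hD, (memZ_iff_forall_mem_sector hδ).2 fun x hx => ?_⟩
  rw [← star_sumElim_dotProduct_fromBlocks_mulVec_schur _ _ _ ((isUnit_iff_isUnit_det _).1 hD)]
  exact hZ _ fun h => hx (funext fun i => congrFun h (Sum.inl i))
end
end

section
/- Let Z^a, Z^b be n×n sectorial matrices partitioned as 2×2 blocks (with conformable block sizes r and n−r) and with all phases in [α, β], β − α < π. Then the hybrid connection Z^c with blocks Z^c₁₁ = Z^a₁₁ + Z^b₁₁ − (Z^a₁₂ − Z^b₁₂)(Z^a₂₂ + Z^b₂₂)⁻¹(Z^a₂₁ − Z^b₂₁), Z^c₁₂ = Z^a₁₂ − (Z^a₁₂ − Z^b₁₂)(Z^a₂₂ + Z^b₂₂)⁻¹ Z^a₂₂, Z^c₂₁ = Z^a₂₁ − Z^a₂₂(Z^a₂₂ + Z^b₂₂)⁻¹(Z^a₂₁ − Z^b₂₁), Z^c₂₂ = Z^a₂₂(Z^a₂₂ + Z^b₂₂)⁻¹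 Z^b₂₂, is sectorial with all phases in [α, β]. -/
open Matrix Complex

noncomputable section

/-!
Put `γ = (α + β) / 2` and `w = (β - α) / 2 < π / 2`. A matrix `M` has all phases in `[α, β]`
exactly when, for every `x ≠ 0`, `e^{-iγ} x*Mx` has positive real part and lies in the sector
`|arg| ≤ w`. One direction: if `M = Tᴴ D T` then `x*Mx = ∑ |(Tx)ᵢ|² e^{iθᵢ}`. The other: the
Hermitian and skew-Hermitian parts of `e^{-iγ} M` can be diagonalised simultaneously by
congruence, giving `M = Tᴴ diag(e^{iγ}(1 + iκᵢ)) T` with `|κᵢ| ≤ tan w`.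

The hybrid connection is `Zᶜ = Fᴴ Zᵃ F + Gᴴ Zᵇ G` for block lower-triangular `F`, `G` with no
common kernel vector, so for `x ≠ 0`, `x*Zᶜx = (Fx)*Zᵃ(Fx) + (Gx)*Zᵇ(Gx)` with `Fx` or `Gx`
nonzero; as the sector is a convex cone, `Zᶜ` has the same property. So does the compression
`Zᵃ₂₂ + Zᵇ₂₂` of `Zᵃ + Zᵇ`, which is therefore invertible.
-/

open scoped Real

section QuadForm

variable {R : Type*} [CommRing R] [StarRing R] {n p : Type*} [Fintype n] [Fintype p]

def quadForm (M : Matrix n n R) (x : n → R) : R := star x ⬝ᵥ M *ᵥ x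

@[simp]
lemma quadForm_zero_right (M : Matrix n n R) : quadForm M 0 = 0 := by
  simp [quadForm]

lemma quadForm_add_left (M N : Matrix n n R) (x : n → R) :
    quadForm (M + N) x = quadForm M x + quadForm N x := by
  simp [quadForm, add_mulVec, dotProduct_add]

lemma quadForm_smul_left (c : R) (M : Matrix n n R) (x : n → R) :
    quadForm (c • M) x = c * quadForm M x := by
  rw [quadForm, smul_mulVec, dotProduct_smul, smul_eq_mul, quadForm]

lemma quadForm_conjTranspose_mul_mul (M : Matrix p p R) (F : Matrix p n R) (x : n → R) :
    quadForm (Fᴴ * M * F) x = quadForm M (F *ᵥ x) := by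
  rw [quadForm, quadForm, ← mulVec_mulVec, ← mulVec_mulVec, dotProduct_mulVec, star_mulVec]

lemma quadForm_conjTranspose (M : Matrix n n R) (x : n → R) :
    quadForm Mᴴ x = star (quadForm M x) := by
  rw [quadForm, quadForm, dotProduct_mulVec, ← star_mulVec, star_dotProduct]

lemma quadForm_diagonal [DecidableEq n] (d : n → R) (x : n → R) :
    quadForm (diagonal d) x = ∑ i, star (x i) * x i * d i := by
  simp only [quadForm, dotProduct, mulVec_diagonal, Pi.star_apply]
  exact Finset.sum_congr rfl fun i _ => by ring

lemma quadForm_diagonal_single [DecidableEq n] (d : n → R) (j : n) :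
    quadForm (diagonal d) (Pi.single j 1) = d j := by
  simp [quadForm]

lemma quadForm_toBlocks₂₂ {l m : Type*} [Fintype l] [Fintype m] (M : Matrix (l ⊕ m) (l ⊕ m) R)
    (v : m → R) : quadForm M.toBlocks₂₂ v = quadForm M (Sum.elim 0 v) := by
  conv_rhs => rw [← fromBlocks_toBlocks M]
  simp [quadForm, fromBlocks_mulVec, dotProduct, Fintype.sum_sum_type]

end QuadForm

open ComplexStarModule in
lemma quadForm_realPart {n : Type*} [Fintype n] (M : Matrix n n ℂ) (x : n → ℂ) :
    quadForm (ℜ M : Matrix n n ℂ) x = (quadForm M x).re := by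
  rw [realPart_apply_coe, quadForm, smul_mulVec, dotProduct_smul, ← quadForm, quadForm_add_left,
    star_eq_conjTranspose, quadForm_conjTranspose, star_def, add_conj]
  simp

lemma Real.abs_tan_eq_tan_abs {φ : ℝ} (hφ : |φ| < π / 2) : |Real.tan φ| = Real.tan |φ| := by
  rcases abs_cases φ with ⟨h, hφ0⟩ | ⟨h, hφ0⟩
  · rw [h, abs_of_nonneg (Real.tan_nonneg_of_nonneg_of_le_pi_div_two hφ0 (by linarith))]
  · rw [h, Real.tan_neg,
      abs_of_nonpos (Real.tan_nonpos_of_nonpos_of_neg_pi_div_two_le hφ0.le (by linarith))]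

lemma Complex.abs_im_le_tan_mul_re_iff {z : ℂ} (hz : 0 < z.re) {w : ℝ}
    (hw : w ∈ Set.Ioo (-(π / 2)) (π / 2)) : |z.im| ≤ Real.tan w * z.re ↔ |arg z| ≤ w := by
  have harg : |arg z| < π / 2 := abs_arg_lt_pi_div_two_iff.mpr (Or.inl hz)
  rw [← div_le_iff₀ hz, ← abs_of_pos hz, ← abs_div, ← tan_arg, Real.abs_tan_eq_tan_abs harg]
  exact Real.strictMonoOn_tan.le_iff_le ⟨by linarith [abs_nonneg (arg z), Real.pi_pos], harg⟩ hw

def sectorCone (t : ℝ) : AddSubmonoid ℂ where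
  carrier := {z | |z.im| ≤ t * z.re}
  zero_mem' := by simp
  add_mem' {z w} hz hw := by
    simp only [Set.mem_ofPred_eq, add_im, add_re, mul_add] at *
    exact (abs_add_le _ _).trans (add_le_add hz hw)

lemma mem_sectorCone {t : ℝ} {z : ℂ} : z ∈ sectorCone t ↔ |z.im| ≤ t * z.re := Iff.rfl

lemma ofReal_mul_mem_sectorCone {t r : ℝ} {z : ℂ} (hr : 0 ≤ r) (hz : z ∈ sectorCone t) :
    (r : ℂ) * z ∈ sectorCone t := by
  rw [mem_sectorCone] at *
  rw [re_ofReal_mul, im_ofReal_mul, abs_mul, abs_of_nonneg hr, mul_left_comm]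
  exact mul_le_mul_of_nonneg_left hz hr

lemma exp_mul_I_mem_sectorCone {φ w : ℝ} (hφ : |φ| ≤ w) (hw : w < π / 2) :
    exp (φ * I) ∈ sectorCone (Real.tan w) := by
  have hφ' := abs_le.mp hφ
  have hre : 0 < (exp (φ * I)).re := by
    rw [exp_ofReal_mul_I_re]
    exact Real.cos_pos_of_mem_Ioo ⟨by linarith, by linarith⟩
  rw [mem_sectorCone, abs_im_le_tan_mul_re_iff hre ⟨by linarith, hw⟩, arg_exp_mul_I,
    (toIocMod_eq_self _).mpr ⟨by linarith [Real.pi_pos], by linarith⟩]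
  exact hφ

/-- For `x ≠ 0`, `e^{-iγ} x*Mx` lies in the open right half-plane and in the sector
`|im| ≤ t re`: the numerical range of `M` lies in the sector of slope `t` about the ray
`arg = γ`. -/
structure NumRangeInSector {n : Type*} [Fintype n] (M : Matrix n n ℂ) (γ t : ℝ) : Prop where
  mem : ∀ x, exp (-γ * I) * quadForm M x ∈ sectorCone t
  re_pos : ∀ x, x ≠ 0 → 0 < (exp (-γ * I) * quadForm M x).re

namespace NumRangeInSector

variable {n p q : Type*} [Fintype n] [Fintype p] [Fintype q] {γ t : ℝ}

lemma re_nonneg {M : Matrix n n ℂ} (h : NumRangeInSector M γ t) (x : n → ℂ) :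
    0 ≤ (exp (-γ * I) * quadForm M x).re := by
  rcases eq_or_ne x 0 with rfl | hx
  · simp
  · exact (h.re_pos x hx).le

lemma conj_add {A : Matrix p p ℂ} {B : Matrix q q ℂ} (hA : NumRangeInSector A γ t)
    (hB : NumRangeInSector B γ t) {F : Matrix p n ℂ} {G : Matrix q n ℂ}
    (hFG : ∀ x, F *ᵥ x = 0 → G *ᵥ x = 0 → x = 0) :
    NumRangeInSector (Fᴴ * A * F + Gᴴ * B * G) γ t := by
  have hsplit : ∀ x, exp (-γ * I) * quadForm (Fᴴ * A * F + Gᴴ * B * G) x =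
      exp (-γ * I) * quadForm A (F *ᵥ x) + exp (-γ * I) * quadForm B (G *ᵥ x) := fun x => by
    rw [quadForm_add_left, quadForm_conjTranspose_mul_mul, quadForm_conjTranspose_mul_mul,
      mul_add]
  refine ⟨fun x => hsplit x ▸ add_mem (hA.mem _) (hB.mem _), fun x hx => ?_⟩
  rw [hsplit, add_re]
  by_cases hF : F *ᵥ x = 0
  · have hG : G *ᵥ x ≠ 0 := fun hG => hx (hFG x hF hG)
    linarith [hA.re_nonneg (F *ᵥ x), hB.re_pos _ hG]
  · linarith [hA.re_pos _ hF, hB.re_nonneg (G *ᵥ x)]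

lemma conj {A : Matrix p p ℂ} (hA : NumRangeInSector A γ t) {F : Matrix p n ℂ}
    (hF : ∀ x, F *ᵥ x = 0 → x = 0) : NumRangeInSector (Fᴴ * A * F) γ t := by
  simpa using hA.conj_add hA (G := (0 : Matrix p n ℂ)) fun x hx _ => hF x hx

lemma add {A B : Matrix n n ℂ} (hA : NumRangeInSector A γ t) (hB : NumRangeInSector B γ t) :
    NumRangeInSector (A + B) γ t := by
  refine ⟨fun x => ?_, fun x hx => ?_⟩
  · rw [quadForm_add_left, mul_add]
    exact add_mem (hA.mem x) (hB.mem x)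
  · rw [quadForm_add_left, mul_add, add_re]
    linarith [hA.re_pos x hx, hB.re_pos x hx]

lemma toBlocks₂₂ {l m : Type*} [Fintype l] [Fintype m] {M : Matrix (l ⊕ m) (l ⊕ m) ℂ}
    (h : NumRangeInSector M γ t) : NumRangeInSector M.toBlocks₂₂ γ t where
  mem v := quadForm_toBlocks₂₂ M v ▸ h.mem _
  re_pos v hv := quadForm_toBlocks₂₂ M v ▸
    h.re_pos _ fun h0 => hv (by simpa using congrArg (· ∘ Sum.inr) h0)

lemma quadForm_ne_zero {M : Matrix n n ℂ} (h : NumRangeInSector M γ t) {x : n → ℂ}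
    (hx : x ≠ 0) : quadForm M x ≠ 0 :=
  fun h0 => by simpa [h0] using h.re_pos x hx

lemma isUnit [DecidableEq n] {M : Matrix n n ℂ} (h : NumRangeInSector M γ t) : IsUnit M := by
  rw [isUnit_iff_isUnit_det, isUnit_iff_ne_zero]
  intro hdet
  obtain ⟨v, hv, hMv⟩ := exists_mulVec_eq_zero_iff.mpr hdet
  exact h.quadForm_ne_zero hv (by simp [quadForm, hMv])

lemma sectorial {M : Matrix n n ℂ} (h : NumRangeInSector M γ t) : Sectorial M := by
  rintro ⟨x, hx, hMx⟩
  refine h.quadForm_ne_zero (x := x) ?_ hMx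
  rintro rfl
  simp at hx

end NumRangeInSector

section Phases

open scoped ComplexOrder

variable {n : Type*} [Fintype n] [DecidableEq n]

lemma numRangeInSector_diagonal {d : n → ℂ} {γ t : ℝ}
    (hd : ∀ i, exp (-γ * I) * d i ∈ sectorCone t ∧ 0 < (exp (-γ * I) * d i).re) :
    NumRangeInSector (diagonal d) γ t := by
  have hsum : ∀ x : n → ℂ, exp (-γ * I) * quadForm (diagonal d) x =
      ∑ i, (normSq (x i) : ℂ) * (exp (-γ * I) * d i) := fun x => by
    rw [quadForm_diagonal, Finset.mul_sum]
    exact Finset.sum_congr rfl fun i _ => by rw [normSq_eq_conj_mul_self, ← star_def]; ring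
  refine ⟨fun x => hsum x ▸ sum_mem fun i _ => ofReal_mul_mem_sectorCone (normSq_nonneg _) (hd i).1,
    fun x hx => ?_⟩
  obtain ⟨j, hj⟩ := Function.ne_iff.mp hx
  rw [hsum, re_sum]
  refine Finset.sum_pos' (fun i _ => ?_) ⟨j, Finset.mem_univ j, ?_⟩
  · rw [re_ofReal_mul]
    exact mul_nonneg (normSq_nonneg _) (hd i).2.le
  · rw [re_ofReal_mul]
    exact mul_pos (normSq_pos.mpr hj) (hd j).2

theorem PhasesIn.numRangeInSector {M : Matrix n n ℂ} {α β : ℝ} (h : PhasesIn M α β)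
    (hαβ : β - α < π) : NumRangeInSector M ((α + β) / 2) (Real.tan ((β - α) / 2)) := by
  obtain ⟨T, D, hT, hD, rfl, hθ⟩ := h
  refine NumRangeInSector.conj ?_ fun x hx =>
    mulVec_injective_iff_isUnit.mpr hT (by simpa using hx)
  rw [← hD.diagonal_diag]
  refine numRangeInSector_diagonal fun i => ?_
  obtain ⟨θ, hαθ, hθβ, hDθ⟩ := hθ i
  have hrot : exp (-((α + β) / 2 : ℝ) * I) * D i i = exp ((θ - (α + β) / 2 : ℝ) * I) := by
    rw [hDθ, ← exp_add]
    push_cast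
    ring_nf
  have hdev : |θ - (α + β) / 2| ≤ (β - α) / 2 := abs_le.mpr ⟨by linarith, by linarith⟩
  rw [diag_apply, hrot, exp_ofReal_mul_I_re]
  exact ⟨exp_mul_I_mem_sectorCone hdev (by linarith),
    Real.cos_pos_of_mem_Ioo ⟨by linarith [abs_le.mp hdev], by linarith [abs_le.mp hdev]⟩⟩

lemma PhasesIn.le {M : Matrix n n ℂ} {α β : ℝ} (h : PhasesIn M α β) (i : n) : α ≤ β := by
  obtain ⟨_, _, -, -, -, hθ⟩ := h
  obtain ⟨θ, hαθ, hθβ, -⟩ := hθ i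
  exact hαθ.trans hθβ

open scoped MatrixOrder in
theorem Matrix.PosDef.exists_isUnit_eq_conjTranspose_mul_self_s14 {H : Matrix n n ℂ}
    (hH : H.PosDef) : ∃ B : Matrix n n ℂ, IsUnit B ∧ H = Bᴴ * B := by
  have hS : (CFC.sqrt H)ᴴ = CFC.sqrt H := (CFC.sqrt_nonneg H).posSemidef.1
  have hSS : CFC.sqrt H * CFC.sqrt H = H := CFC.sqrt_mul_sqrt_self H hH.posSemidef.nonneg
  refine ⟨CFC.sqrt H, ?_, by rw [hS, hSS]⟩
  have hdet := (isUnit_iff_isUnit_det H).mp hH.isUnit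
  rw [← hSS, det_mul] at hdet
  exact (isUnit_iff_isUnit_det _).mpr (isUnit_of_mul_isUnit_left hdet)

theorem Matrix.PosDef.exists_conj_diagonal {H K : Matrix n n ℂ} (hH : H.PosDef)
    (hK : K.IsHermitian) :
    ∃ T : Matrix n n ℂ, IsUnit T ∧ ∃ κ : n → ℝ,
      H = Tᴴ * T ∧ K = Tᴴ * diagonal (fun i => (κ i : ℂ)) * T := by
  obtain ⟨B, hB, rfl⟩ := hH.exists_isUnit_eq_conjTranspose_mul_self_s14
  have hK' : ((B⁻¹)ᴴ * K * B⁻¹).IsHermitian := isHermitian_conjTranspose_mul_mul _ hK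
  set U : Matrix n n ℂ := (hK'.eigenvectorUnitary : Matrix n n ℂ)
  have hU : U * star U = 1 := Unitary.mul_star_self_of_mem hK'.eigenvectorUnitary.2
  have hU' : IsUnit (star U) := by simpa using Unitary.isUnit_coe (U := star hK'.eigenvectorUnitary)
  have hUB : IsUnit (star U * B) := hU'.mul hB
  have hBdet := (isUnit_iff_isUnit_det B).mp hB
  refine ⟨star U * B, hUB, hK'.eigenvalues, ?_, ?_⟩
  · simp only [← star_eq_conjTranspose, star_mul, star_star, mul_assoc]
    rw [← mul_assoc U, hU, one_mul]
  · have hspec := hK'.spectral_theorem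
    rw [Unitary.conjStarAlgAut_apply] at hspec
    calc K = Bᴴ * ((B⁻¹)ᴴ * K * B⁻¹) * B := by
          simp only [← mul_assoc, ← conjTranspose_mul, nonsing_inv_mul B hBdet,
            conjTranspose_one, one_mul]
          rw [mul_assoc, nonsing_inv_mul B hBdet, mul_one]
      _ = Bᴴ * (U * diagonal (fun i => (hK'.eigenvalues i : ℂ)) * star U) * B :=
          congrArg (fun X => Bᴴ * X * B) hspec
      _ = _ := by simp only [← star_eq_conjTranspose, star_mul, star_star, mul_assoc]

open ComplexStarModule in
theorem NumRangeInSector.exists_eq_conj_diagonal {M : Matrix n n ℂ} {γ t : ℝ}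
    (h : NumRangeInSector M γ t) :
    ∃ T : Matrix n n ℂ, IsUnit T ∧ ∃ κ : n → ℝ, (∀ i, |κ i| ≤ t) ∧
      M = Tᴴ * diagonal (fun i => exp (γ * I) * (1 + κ i * I)) * T := by
  set A := exp (-γ * I) • M with hAdef
  have hH : (ℜ A : Matrix n n ℂ).PosDef := by
    refine PosDef.of_dotProduct_mulVec_pos (ℜ A).2 fun x hx => ?_
    rw [← quadForm, quadForm_realPart, quadForm_smul_left, zero_lt_real]
    exact h.re_pos x hx
  obtain ⟨T, hT, κ, hHT, hKT⟩ := hH.exists_conj_diagonal (ℑ A).2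
  have hA : A = Tᴴ * diagonal (fun i => 1 + κ i * I) * T := by
    have hdiag : diagonal (fun i => 1 + κ i * I) = 1 + I • diagonal (fun i => (κ i : ℂ)) := by
      rw [← diagonal_one, ← diagonal_smul, diagonal_add]
      congr 1
      ext i
      simp [mul_comm]
    rw [← realPart_add_I_smul_imaginaryPart A, hHT, hKT, hdiag, mul_add, add_mul, mul_one,
      mul_smul_comm, smul_mul_assoc]
  refine ⟨T, hT, κ, fun i => ?_, ?_⟩
  · have hTT : T *ᵥ (T⁻¹ *ᵥ Pi.single i 1) = Pi.single i 1 := by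
      rw [mulVec_mulVec, mul_nonsing_inv T ((isUnit_iff_isUnit_det T).mp hT), one_mulVec]
    have hmem := h.mem (T⁻¹ *ᵥ Pi.single i 1)
    rw [← quadForm_smul_left, ← hAdef, hA, quadForm_conjTranspose_mul_mul, hTT,
      quadForm_diagonal_single, mem_sectorCone] at hmem
    simpa using hmem
  · have hM : M = exp (γ * I) • A := by
      rw [smul_smul, ← exp_add]
      simp
    rw [hM, hA, ← smul_mul_assoc, ← mul_smul_comm, ← diagonal_smul]
    rfl

theorem phasesIn_conj_diagonal {T : Matrix n n ℂ} (hT : IsUnit T) {d : n → ℂ}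
    (hd : ∀ i, d i ≠ 0) {α β : ℝ}
    (hargs : ∀ i, ∃ θ : ℝ, α ≤ θ ∧ θ ≤ β ∧ d i = ‖d i‖ * exp (θ * I)) :
    PhasesIn (Tᴴ * diagonal d * T) α β := by
  choose θ hαθ hθβ hdθ using hargs
  set r : n → ℂ := fun i => (√‖d i‖ : ℝ)
  have hr : ∀ i, r i ≠ 0 := fun i => by simpa [r] using hd i
  refine ⟨diagonal r * T, diagonal fun i => exp (θ i * I), ?_, isDiag_diagonal _, ?_,
    fun i => ⟨θ i, hαθ i, hθβ i, diagonal_apply_eq _ _⟩⟩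
  · refine IsUnit.mul ?_ hT
    rw [isUnit_iff_isUnit_det, det_diagonal]
    exact isUnit_iff_ne_zero.mpr (Finset.prod_ne_zero_iff.mpr fun i _ => hr i)
  · have hrr : (diagonal r)ᴴ = diagonal r := by
      rw [diagonal_conjTranspose]
      congr 1
      ext i
      simp [r]
    have hdiag : diagonal r * diagonal (fun i => exp (θ i * I)) * diagonal r = diagonal d := by
      rw [diagonal_mul_diagonal, diagonal_mul_diagonal]
      congr 1
      ext i
      rw [mul_right_comm, ← ofReal_mul, Real.mul_self_sqrt (norm_nonneg _), ← hdθ]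
    rw [conjTranspose_mul, hrr, ← hdiag]
    simp only [mul_assoc]

theorem memZ_of_numRangeInSector {M : Matrix n n ℂ} {α β : ℝ} (hαβ : α ≤ β)
    (hβα : β - α < π) (h : NumRangeInSector M ((α + β) / 2) (Real.tan ((β - α) / 2))) :
    MemZ M α β := by
  refine ⟨h.sectorial, ?_⟩
  obtain ⟨T, hT, κ, hκ, rfl⟩ := h.exists_eq_conj_diagonal
  refine phasesIn_conj_diagonal hT
    (fun i => mul_ne_zero (exp_ne_zero _) fun h0 => by simpa using congrArg re h0)
    fun i => ⟨(α + β) / 2 + arg (1 + κ i * I), ?_⟩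
  have hre : 0 < (1 + κ i * I).re := by simp
  have harg : |arg (1 + κ i * I)| ≤ (β - α) / 2 := by
    rw [← abs_im_le_tan_mul_re_iff hre ⟨by linarith [Real.pi_pos], by linarith⟩]
    simpa using hκ i
  refine ⟨by linarith [(abs_le.mp harg).1], by linarith [(abs_le.mp harg).2], ?_⟩
  rw [norm_mul, norm_exp_ofReal_mul_I, one_mul, ofReal_add, add_mul, exp_add]
  nth_rewrite 1 [← norm_mul_exp_arg_mul_I (1 + κ i * I)]
  ring

lemma memZ_of_isEmpty [IsEmpty n] (M : Matrix n n ℂ) (α β : ℝ) : MemZ M α β :=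
  ⟨fun ⟨x, hx, _⟩ => by simp at hx,
    ⟨1, 1, isUnit_one, isDiag_one, Subsingleton.elim _ _, isEmptyElim⟩⟩

end Phases

section Hybrid

variable {R : Type*} [CommRing R] [StarRing R] {l m : Type*} [Fintype l] [Fintype m]
  [DecidableEq l] [DecidableEq m]

def hybridConnection (A B : Matrix (l ⊕ m) (l ⊕ m) R) : Matrix (l ⊕ m) (l ⊕ m) R :=
  fromBlocks
    (A.toBlocks₁₁ + B.toBlocks₁₁ -
      (A.toBlocks₁₂ - B.toBlocks₁₂) * (A.toBlocks₂₂ + B.toBlocks₂₂)⁻¹ *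
        (A.toBlocks₂₁ - B.toBlocks₂₁))
    (A.toBlocks₁₂ -
      (A.toBlocks₁₂ - B.toBlocks₁₂) * (A.toBlocks₂₂ + B.toBlocks₂₂)⁻¹ * A.toBlocks₂₂)
    (A.toBlocks₂₁ -
      A.toBlocks₂₂ * (A.toBlocks₂₂ + B.toBlocks₂₂)⁻¹ * (A.toBlocks₂₁ - B.toBlocks₂₁))
    (A.toBlocks₂₂ * (A.toBlocks₂₂ + B.toBlocks₂₂)⁻¹ * B.toBlocks₂₂)

lemma conjTranspose_fromBlocks_mul_add_same_lower (X : Matrix m l R) (Y : Matrix m m R)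
    (P P' : Matrix l l R) (Q Q' : Matrix l m R) (U : Matrix m l R) (W : Matrix m m R) :
    (fromBlocks 1 0 X Y)ᴴ * fromBlocks P Q U W +
        (fromBlocks 1 0 (-X) (1 - Y))ᴴ * fromBlocks P' Q' U W =
      fromBlocks (P + P') (Q + Q') U W := by
  simp only [fromBlocks_conjTranspose, fromBlocks_multiply, fromBlocks_add, conjTranspose_one,
    conjTranspose_zero, conjTranspose_neg, conjTranspose_sub, Matrix.one_mul, Matrix.zero_mul,
    Matrix.neg_mul, Matrix.sub_mul, zero_add]
  congr 1 <;> abel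

theorem hybridConnection_eq_conj_add {A B : Matrix (l ⊕ m) (l ⊕ m) R}
    (hS : IsUnit (A.toBlocks₂₂ + B.toBlocks₂₂)) :
    ∃ F G : Matrix (l ⊕ m) (l ⊕ m) R, hybridConnection A B = Fᴴ * A * F + Gᴴ * B * G ∧
      ∀ x, F *ᵥ x = 0 → G *ᵥ x = 0 → x = 0 := by
  set S := A.toBlocks₂₂ + B.toBlocks₂₂
  have hSS : S * S⁻¹ = 1 := mul_nonsing_inv S ((isUnit_iff_isUnit_det S).mp hS)
  have hSS' : S⁻¹ * S = 1 := nonsing_inv_mul S ((isUnit_iff_isUnit_det S).mp hS)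
  -- `X` and `Y` make `A * F` and `B * G` share their lower block row (`h21`, `h22`).
  set X := S⁻¹ * (B.toBlocks₂₁ - A.toBlocks₂₁)
  set Y := S⁻¹ * B.toBlocks₂₂
  refine ⟨fromBlocks 1 0 X Y, fromBlocks 1 0 (-X) (1 - Y), ?_, fun x hF hG => ?_⟩
  · have h21 : A.toBlocks₂₁ + A.toBlocks₂₂ * X = B.toBlocks₂₁ - B.toBlocks₂₂ * X := by
      have hSX : A.toBlocks₂₂ * X + B.toBlocks₂₂ * X = B.toBlocks₂₁ - A.toBlocks₂₁ := by
        rw [← Matrix.add_mul, ← Matrix.mul_assoc, hSS, Matrix.one_mul]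
      rw [eq_sub_iff_add_eq, add_assoc, hSX, add_sub_cancel]
    have h22 : A.toBlocks₂₂ * Y = B.toBlocks₂₂ * (1 - Y) := by
      have hSY : A.toBlocks₂₂ * Y + B.toBlocks₂₂ * Y = B.toBlocks₂₂ := by
        rw [← Matrix.add_mul, ← Matrix.mul_assoc, hSS, Matrix.one_mul]
      rw [Matrix.mul_sub, Matrix.mul_one, eq_sub_iff_add_eq, hSY]
    have hAF : A * fromBlocks 1 0 X Y = fromBlocks (A.toBlocks₁₁ + A.toBlocks₁₂ * X)
        (A.toBlocks₁₂ * Y) (A.toBlocks₂₁ + A.toBlocks₂₂ * X) (A.toBlocks₂₂ * Y) := by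
      conv_lhs => rw [← fromBlocks_toBlocks A]
      simp [fromBlocks_multiply]
    have hBG : B * fromBlocks 1 0 (-X) (1 - Y) = fromBlocks (B.toBlocks₁₁ - B.toBlocks₁₂ * X)
        (B.toBlocks₁₂ * (1 - Y)) (A.toBlocks₂₁ + A.toBlocks₂₂ * X) (A.toBlocks₂₂ * Y) := by
      conv_lhs => rw [← fromBlocks_toBlocks B]
      simp [fromBlocks_multiply, h21, h22, sub_eq_add_neg]
    have hX : S⁻¹ * (A.toBlocks₂₁ - B.toBlocks₂₁) = -X := by
      rw [← Matrix.mul_neg, neg_sub]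
    have hY : S⁻¹ * A.toBlocks₂₂ = 1 - Y := by
      rw [eq_sub_iff_add_eq, ← Matrix.mul_add, hSS']
    rw [mul_assoc, mul_assoc, hAF, hBG, conjTranspose_fromBlocks_mul_add_same_lower,
      hybridConnection, Matrix.mul_assoc, hX, Matrix.mul_assoc, hY, Matrix.mul_assoc,
      Matrix.mul_assoc, hX]
    congr 1
    · simp only [Matrix.mul_neg, Matrix.sub_mul]
      abel
    · simp only [Matrix.mul_sub, Matrix.sub_mul, Matrix.mul_one]
      abel
    · rw [Matrix.mul_neg, sub_neg_eq_add]
  · have h1 := congrArg (· ∘ Sum.inl) hF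
    have h2 := congrArg (· ∘ Sum.inr) hF
    have h3 := congrArg (· ∘ Sum.inr) hG
    simp only [fromBlocks_mulVec, one_mulVec, zero_mulVec, add_zero, Sum.elim_comp_inl,
      Pi.zero_comp, Sum.elim_comp_inr] at h1 h2 h3
    rw [h1, mulVec_zero, zero_add] at h2 h3
    rw [sub_mulVec, one_mulVec, h2, sub_zero] at h3
    ext (i | i)
    · exact congrFun h1 i
    · exact congrFun h3 i

end Hybrid

theorem hybrid_connection_preserves_phases {l m : Type*} [Fintype l] [Fintype m]
    [DecidableEq l] [DecidableEq m]
    (Za Zb : Matrix (l ⊕ m) (l ⊕ m) ℂ) (α β : ℝ)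
    (hαβ : β - α < Real.pi) (ha : MemZ Za α β) (hb : MemZ Zb α β) :
    IsUnit (Za.toBlocks₂₂ + Zb.toBlocks₂₂) ∧
      MemZ (Matrix.fromBlocks
        (Za.toBlocks₁₁ + Zb.toBlocks₁₁ -
          (Za.toBlocks₁₂ - Zb.toBlocks₁₂) * (Za.toBlocks₂₂ + Zb.toBlocks₂₂)⁻¹ *
            (Za.toBlocks₂₁ - Zb.toBlocks₂₁))
        (Za.toBlocks₁₂ -
          (Za.toBlocks₁₂ - Zb.toBlocks₁₂) * (Za.toBlocks₂₂ + Zb.toBlocks₂₂)⁻¹ *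
            Za.toBlocks₂₂)
        (Za.toBlocks₂₁ -
          Za.toBlocks₂₂ * (Za.toBlocks₂₂ + Zb.toBlocks₂₂)⁻¹ *
            (Za.toBlocks₂₁ - Zb.toBlocks₂₁))
        (Za.toBlocks₂₂ * (Za.toBlocks₂₂ + Zb.toBlocks₂₂)⁻¹ * Zb.toBlocks₂₂)) α β := by
  have hNa := ha.2.numRangeInSector hαβ
  have hNb := hb.2.numRangeInSector hαβ
  have hS : IsUnit (Za.toBlocks₂₂ + Zb.toBlocks₂₂) := (hNa.toBlocks₂₂.add hNb.toBlocks₂₂).isUnit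
  refine ⟨hS, ?_⟩
  obtain ⟨F, G, hZc, hFG⟩ := hybridConnection_eq_conj_add hS
  have hNc : NumRangeInSector (hybridConnection Za Zb) _ _ := hZc ▸ hNa.conj_add hNb hFG
  rcases isEmpty_or_nonempty (l ⊕ m) with _ | ⟨⟨i⟩⟩
  · exact memZ_of_isEmpty _ α β
  · exact memZ_of_numRangeInSector (ha.2.le i) hαβ hNc
end
end

section
/- Let Z^a, Z^b ∈ ℂ^{n×n} be sectorial with phases in [α, β], β − α < π, and let Φ, Ψ, Ξ, Ω ∈ ℝ^{n×n}. Define M = [[Φ, Ψ],[Ξ, Ω]] · diag(Z^a, Z^b) · [[Φ*, Ξ*],[Ψ*, Ω*]] and suppose its Schur complement M/₂₂ = M₁₁ − M₁₂ M₂₂† M₂₁ is well-defined (i.e., ℛ(M₂₁) ⊆ ℛ(M₂₂) and 𝒩(M₁₂) ⊇ 𝒩(M₂₂)). Then M/₂₂ is semi-sectorial with all phases in [α, β]; in particular, its numerical range is contained in the closed sector {r e^{jθ} : r ≥ 0, α ≤ θ ≤ β}. -/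
open Matrix Complex

noncomputable section

/-!
Write `S = M₁₁ - M₁₂ G M₂₁`. Choosing `y = -G M₂₁ x` gives `M₂₂ y = -M₂₁ x` (this is where
`ℛ(M₂₁) ⊆ ℛ(M₂₂)` and `M₂₂ G M₂₂ = M₂₂` enter), so `x* S x = (x, y)* M (x, y)`. For
`M = F diag(Zᵃ, Zᵇ) Fᴴ` this is the sum of the quadratic forms of `Zᵃ` and `Zᵇ` at the two halves
of `Fᴴ (x, y)`, and a sectorial decomposition `Tᴴ D T` writes each of those as a nonnegative
combination of the unit phases of `D`. All these values lie in a convex cone which, as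
`β - α < π`, is the sector `[α, β]` and is contained in a closed half-plane; hence the numerical
range of `S` lies in the sector and `0` is not interior to it.
-/

section PhaseCone

/-- The sector `[α, β]` cut out by half-planes (equal to `sector α β` when `0 ≤ β - α < π`).
Unlike `sector α β` it contains `0` also when `β < α`, which matters for the empty index type,
where `PhasesIn` holds for all `α, β`. -/
def phaseCone (α β : ℝ) : AddSubmonoid ℂ where
  carrier := {z | 0 ≤ (exp (-(α : ℂ) * I) * z).im ∧ (exp (-(β : ℂ) * I) * z).im ≤ 0 ∧
    0 ≤ (exp (-(((α + β) / 2 : ℝ) : ℂ) * I) * z).re}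
  zero_mem' := by simp
  add_mem' := by
    rintro z w ⟨hz₁, hz₂, hz₃⟩ ⟨hw₁, hw₂, hw₃⟩
    simp only [Set.mem_ofPred_eq, mul_add, add_im, add_re]
    exact ⟨add_nonneg hz₁ hw₁, add_nonpos hz₂ hw₂, add_nonneg hz₃ hw₃⟩

lemma exp_neg_mul_I_mul_polar (a r θ : ℝ) :
    exp (-(a : ℂ) * I) * (r * exp (θ * I)) = r * exp ((θ - a : ℝ) * I) := by
  rw [mul_left_comm, ← exp_add]
  push_cast
  ring_nf

lemma im_exp_neg_mul_I_mul_polar (a r θ : ℝ) :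
    (exp (-(a : ℂ) * I) * (r * exp (θ * I))).im = r * Real.sin (θ - a) := by
  rw [exp_neg_mul_I_mul_polar, im_ofReal_mul, exp_ofReal_mul_I_im]

lemma re_exp_neg_mul_I_mul_polar (a r θ : ℝ) :
    (exp (-(a : ℂ) * I) * (r * exp (θ * I))).re = r * Real.cos (θ - a) := by
  rw [exp_neg_mul_I_mul_polar, re_ofReal_mul, exp_ofReal_mul_I_re]

variable {α β : ℝ}

lemma ofReal_mul_exp_mem_phaseCone (hαβ : β - α < Real.pi) {r θ : ℝ} (hr : 0 ≤ r)
    (hαθ : α ≤ θ) (hθβ : θ ≤ β) : (r : ℂ) * exp (θ * I) ∈ phaseCone α β := by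
  have hπ := Real.pi_pos
  refine ⟨?_, ?_, ?_⟩
  · rw [im_exp_neg_mul_I_mul_polar]
    exact mul_nonneg hr (Real.sin_nonneg_of_nonneg_of_le_pi (by linarith) (by linarith))
  · rw [im_exp_neg_mul_I_mul_polar, ← neg_sub, Real.sin_neg]
    exact mul_nonpos_of_nonneg_of_nonpos hr
      (neg_nonpos.2 (Real.sin_nonneg_of_nonneg_of_le_pi (by linarith) (by linarith)))
  · rw [re_exp_neg_mul_I_mul_polar]
    exact mul_nonneg hr (Real.cos_nonneg_of_neg_pi_div_two_le_of_le (by linarith) (by linarith))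

lemma eq_norm_mul_exp_add_arg_rotate (z : ℂ) (γ : ℝ) :
    z = ‖z‖ * exp ((γ + arg (exp (-(γ : ℂ) * I) * z) : ℝ) * I) := by
  have hnorm : ‖exp (-(γ : ℂ) * I) * z‖ = ‖z‖ := by
    rw [norm_mul, ← ofReal_neg, norm_exp_ofReal_mul_I, one_mul]
  rw [ofReal_add, add_mul, exp_add, mul_left_comm, ← hnorm, norm_mul_exp_arg_mul_I, ← mul_assoc,
    ← exp_add]
  simp

lemma phaseCone_subset_sector (hαβ : α ≤ β) (hβα : β - α < Real.pi) :
    (phaseCone α β : Set ℂ) ⊆ sector α β := by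
  intro z hz
  obtain rfl | hz₀ := eq_or_ne z 0
  · exact ⟨0, α, le_rfl, le_rfl, hαβ, by simp⟩
  have hπ := Real.pi_pos
  -- the third condition says that the argument measured from the bisector lies in `[-π/2, π/2]`
  obtain ⟨φ, hφ, hpolar⟩ : ∃ φ : ℝ, |φ| ≤ Real.pi / 2 ∧ z = ‖z‖ * exp (((α + β) / 2 + φ : ℝ) * I) :=
    ⟨_, abs_arg_le_pi_div_two_iff.2 hz.2.2, eq_norm_mul_exp_add_arg_rotate z _⟩
  obtain ⟨hφ₁, hφ₂⟩ := abs_le.1 hφ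
  obtain ⟨h₁, h₂, -⟩ := hz
  rw [hpolar, im_exp_neg_mul_I_mul_polar] at h₁ h₂
  have hr : 0 < ‖z‖ := norm_pos_iff.2 hz₀
  refine ⟨‖z‖, (α + β) / 2 + φ, hr.le, ?_, ?_, hpolar⟩
  · by_contra! h
    have := Real.sin_neg_of_neg_of_neg_pi_lt (x := (α + β) / 2 + φ - α) (by linarith) (by linarith)
    nlinarith
  · by_contra! h
    have := Real.sin_pos_of_pos_of_lt_pi (x := (α + β) / 2 + φ - β) (by linarith) (by linarith)
    nlinarith

lemma zero_notMem_interior_phaseCone : (0 : ℂ) ∉ interior (phaseCone α β : Set ℂ) := by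
  intro h
  obtain ⟨ε, hε, hball⟩ := Metric.mem_nhds_iff.1 (mem_interior_iff_mem_nhds.1 h)
  set γ := (α + β) / 2
  have hmem : ((-(ε / 2) : ℝ) : ℂ) * exp (γ * I) ∈ (phaseCone α β : Set ℂ) := by
    apply hball
    rw [Metric.mem_ball, dist_zero_right, norm_mul, norm_exp_ofReal_mul_I, mul_one,
      norm_real, Real.norm_eq_abs, abs_neg, abs_of_pos (half_pos hε)]
    exact half_lt_self hε
  have hre := hmem.2.2
  rw [re_exp_neg_mul_I_mul_polar, sub_self, Real.cos_zero, mul_one] at hre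
  linarith

end PhaseCone

section QuadForm

variable {ι κ : Type*} [Fintype ι] [Fintype κ]

def QuadFormMapsTo (C : Matrix ι ι ℂ) (K : Set ℂ) : Prop :=
  ∀ v : ι → ℂ, star v ⬝ᵥ C *ᵥ v ∈ K

lemma QuadFormMapsTo.numRange_subset {C : Matrix ι ι ℂ} {K : Set ℂ} (h : QuadFormMapsTo C K) :
    numRange C ⊆ K := by
  rintro _ ⟨v, -, rfl⟩
  exact h v

lemma dotProduct_mul_mul_conjTranspose_mulVec (F : Matrix κ ι ℂ) (C : Matrix ι ι ℂ)
    (v : κ → ℂ) : star v ⬝ᵥ (F * C * Fᴴ) *ᵥ v = star (Fᴴ *ᵥ v) ⬝ᵥ C *ᵥ (Fᴴ *ᵥ v) := by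
  rw [star_mulVec, conjTranspose_conjTranspose, ← dotProduct_mulVec, mulVec_mulVec, mulVec_mulVec]

lemma QuadFormMapsTo.conj {C : Matrix ι ι ℂ} {K : Set ℂ} (h : QuadFormMapsTo C K)
    (F : Matrix κ ι ℂ) : QuadFormMapsTo (F * C * Fᴴ) K := fun v => by
  rw [dotProduct_mul_mul_conjTranspose_mulVec]
  exact h _

lemma dotProduct_fromBlocks_zero_mulVec (A : Matrix ι ι ℂ) (B : Matrix κ κ ℂ) (w : ι ⊕ κ → ℂ) :
    star w ⬝ᵥ fromBlocks A 0 0 B *ᵥ w =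
      star (w ∘ Sum.inl) ⬝ᵥ A *ᵥ (w ∘ Sum.inl) + star (w ∘ Sum.inr) ⬝ᵥ B *ᵥ (w ∘ Sum.inr) := by
  conv_lhs => rw [← Sum.elim_comp_inl_inr w]
  rw [fromBlocks_mulVec, Function.star_sumElim, sumElim_dotProduct_sumElim]
  simp

lemma QuadFormMapsTo.fromBlocks {A : Matrix ι ι ℂ} {B : Matrix κ κ ℂ} {K : AddSubmonoid ℂ}
    (hA : QuadFormMapsTo A K) (hB : QuadFormMapsTo B K) :
    QuadFormMapsTo (Matrix.fromBlocks A 0 0 B) K := fun w => by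
  rw [dotProduct_fromBlocks_zero_mulVec]
  exact K.add_mem (hA _) (hB _)

lemma quadFormMapsTo_phaseCone_of_diag [DecidableEq ι] {α β : ℝ} (hαβ : β - α < Real.pi)
    {D : Matrix ι ι ℂ} (hD : D.IsDiag) (hphase : ∀ i, ∃ θ : ℝ, α ≤ θ ∧ θ ≤ β ∧ D i i = exp (θ * I)) :
    QuadFormMapsTo D (phaseCone α β) := fun u => by
  have hsum : star u ⬝ᵥ D *ᵥ u = ∑ i, (normSq (u i) : ℂ) * D i i := by
    conv_lhs => rw [← hD.diagonal_diag]
    refine Finset.sum_congr rfl fun i _ => ?_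
    rw [mulVec_diagonal, Pi.star_apply, ← mul_conj, diag_apply, star_def]
    ring
  rw [hsum]
  refine AddSubmonoid.sum_mem _ fun i _ => ?_
  obtain ⟨θ, hαθ, hθβ, hDi⟩ := hphase i
  rw [hDi]
  exact ofReal_mul_exp_mem_phaseCone hαβ (normSq_nonneg _) hαθ hθβ

lemma PhasesIn.quadFormMapsTo_phaseCone [DecidableEq ι] {C : Matrix ι ι ℂ} {α β : ℝ}
    (hαβ : β - α < Real.pi) (h : PhasesIn C α β) : QuadFormMapsTo C (phaseCone α β) := by
  obtain ⟨T, D, -, hD, rfl, hphase⟩ := h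
  simpa using (quadFormMapsTo_phaseCone_of_diag hαβ hD hphase).conj Tᴴ

lemma PhasesIn.le_s19 [DecidableEq ι] [Nonempty ι] {C : Matrix ι ι ℂ} {α β : ℝ}
    (h : PhasesIn C α β) : α ≤ β := by
  obtain ⟨_, _, -, -, -, hphase⟩ := h
  obtain ⟨θ, hαθ, hθβ, -⟩ := hphase (Classical.arbitrary ι)
  exact hαθ.trans hθβ

lemma nonempty_of_mem_numRange {C : Matrix ι ι ℂ} {z : ℂ} (hz : z ∈ numRange C) : Nonempty ι := by
  obtain ⟨x, hx, -⟩ := hz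
  by_contra h
  rw [not_nonempty_iff] at h
  simp [dotProduct] at hx

end QuadForm

section SchurComplement

variable {m n R : Type*} [Fintype m] [Fintype n] [CommRing R]

lemma mulVec_mulVec_mulVec_eq_of_range_le {A G : Matrix n n R} {B : Matrix n m R}
    (hG : A * G * A = A) (hrange : LinearMap.range B.mulVecLin ≤ LinearMap.range A.mulVecLin)
    (x : m → R) : A *ᵥ G *ᵥ B *ᵥ x = B *ᵥ x := by
  obtain ⟨u, hu⟩ := hrange (LinearMap.mem_range_self _ x)
  simp only [mulVecLin_apply] at hu
  rw [← hu, mulVec_mulVec, mulVec_mulVec, hG]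

lemma dotProduct_schur_mulVec [Star R] (M : Matrix (m ⊕ n) (m ⊕ n) R) {G : Matrix n n R}
    (hG : M.toBlocks₂₂ * G * M.toBlocks₂₂ = M.toBlocks₂₂)
    (hrange : LinearMap.range M.toBlocks₂₁.mulVecLin ≤ LinearMap.range M.toBlocks₂₂.mulVecLin)
    (x : m → R) :
    star x ⬝ᵥ (M.toBlocks₁₁ - M.toBlocks₁₂ * G * M.toBlocks₂₁) *ᵥ x =
      star (Sum.elim x (-(G *ᵥ M.toBlocks₂₁ *ᵥ x))) ⬝ᵥ
        M *ᵥ Sum.elim x (-(G *ᵥ M.toBlocks₂₁ *ᵥ x)) := by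
  conv_rhs => enter [2, 1]; rw [← fromBlocks_toBlocks M]
  rw [fromBlocks_mulVec, Function.star_sumElim, sumElim_dotProduct_sumElim]
  simp only [Sum.elim_comp_inl, Sum.elim_comp_inr, mulVec_neg,
    mulVec_mulVec_mulVec_eq_of_range_le hG hrange, add_neg_cancel, dotProduct_zero, add_zero,
    sub_eq_add_neg, add_mulVec, neg_mulVec, ← mulVec_mulVec]

lemma QuadFormMapsTo.schur {M : Matrix (m ⊕ n) (m ⊕ n) ℂ} {K : Set ℂ} (h : QuadFormMapsTo M K)
    {G : Matrix n n ℂ} (hG : M.toBlocks₂₂ * G * M.toBlocks₂₂ = M.toBlocks₂₂)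
    (hrange : LinearMap.range M.toBlocks₂₁.mulVecLin ≤ LinearMap.range M.toBlocks₂₂.mulVecLin) :
    QuadFormMapsTo (M.toBlocks₁₁ - M.toBlocks₁₂ * G * M.toBlocks₂₁) K := fun x => by
  rw [dotProduct_schur_mulVec M hG hrange]
  exact h _

end SchurComplement

theorem general_connection_preserves_phases_general {n : ℕ}
    (Za Zb : Matrix (Fin n) (Fin n) ℂ) (α β : ℝ)
    (hαβ : β - α < Real.pi) (ha : MemZ Za α β) (hb : MemZ Zb α β)
    (F : Matrix ((Fin n) ⊕ (Fin n)) ((Fin n) ⊕ (Fin n)) ℂ)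
    (M : Matrix ((Fin n) ⊕ (Fin n)) ((Fin n) ⊕ (Fin n)) ℂ)
    (hM : M = F * Matrix.fromBlocks Za 0 0 Zb * Fᴴ)
    -- well-definedness of the generalized Schur complement:
    (hrange : LinearMap.range (M.toBlocks₂₁).mulVecLin ≤
      LinearMap.range (M.toBlocks₂₂).mulVecLin)
    -- `G` is any generalized inverse of `M₂₂` (in particular the Moore–Penrose inverse):
    (G : Matrix (Fin n) (Fin n) ℂ)
    (hG : M.toBlocks₂₂ * G * M.toBlocks₂₂ = M.toBlocks₂₂) :
    (0 : ℂ) ∉ interior (numRange (M.toBlocks₁₁ - M.toBlocks₁₂ * G * M.toBlocks₂₁)) ∧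
      numRange (M.toBlocks₁₁ - M.toBlocks₁₂ * G * M.toBlocks₂₁) ⊆ sector α β := by
  have hM_cone : QuadFormMapsTo M (phaseCone α β) := hM ▸
    ((ha.2.quadFormMapsTo_phaseCone hαβ).fromBlocks (hb.2.quadFormMapsTo_phaseCone hαβ)).conj F
  have hS := (hM_cone.schur hG hrange).numRange_subset
  refine ⟨fun h => zero_notMem_interior_phaseCone (interior_mono hS h), fun z hz => ?_⟩
  have := nonempty_of_mem_numRange hz
  exact phaseCone_subset_sector ha.2.le_s19 hαβ (hS hz)

theorem general_connection_preserves_phases {n : ℕ}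
    (Za Zb : Matrix (Fin n) (Fin n) ℂ) (α β : ℝ)
    (hαβ : β - α < Real.pi) (ha : MemZ Za α β) (hb : MemZ Zb α β)
    (Φ Ψ Ξ Ω : Matrix (Fin n) (Fin n) ℝ)
    (F : Matrix ((Fin n) ⊕ (Fin n)) ((Fin n) ⊕ (Fin n)) ℂ)
    (hF : F = (Matrix.fromBlocks Φ Ψ Ξ Ω).map (Complex.ofReal))
    (M : Matrix ((Fin n) ⊕ (Fin n)) ((Fin n) ⊕ (Fin n)) ℂ)
    (hM : M = F * Matrix.fromBlocks Za 0 0 Zb * Fᴴ)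
    -- well-definedness of the generalized Schur complement:
    (hrange : LinearMap.range (M.toBlocks₂₁).mulVecLin ≤
      LinearMap.range (M.toBlocks₂₂).mulVecLin)
    (hker : LinearMap.ker (M.toBlocks₂₂).mulVecLin ≤
      LinearMap.ker (M.toBlocks₁₂).mulVecLin)
    -- `G` is any generalized inverse of `M₂₂` (in particular the Moore–Penrose inverse):
    (G : Matrix (Fin n) (Fin n) ℂ)
    (hG : M.toBlocks₂₂ * G * M.toBlocks₂₂ = M.toBlocks₂₂) :
    (0 : ℂ) ∉ interior (numRange (M.toBlocks₁₁ - M.toBlocks₁₂ * G * M.toBlocks₂₁)) ∧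
      numRange (M.toBlocks₁₁ - M.toBlocks₁₂ * G * M.toBlocks₂₁) ⊆ sector α β :=
  general_connection_preserves_phases_general Za Zb α β hαβ ha hb F M hM hrange G hG

end
end
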